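/- arXiv:2012.13306 — 4 statements merged into one kernel-verified Lean document; each statement's English description precedes it below -/
import Mathlib

section
/- Let G be a finite bipartite graph with parts X₁ and X₂ such that every vertex of X₁ has at least one neighbor, and for S ⊆ X₁ let N(S) ⊆ X₂ denote the set of vertices adjacent to some vertex of S. Let μ be a probability measure on X₁ with μ(x) > 0 for all x ∈ X₁, and let ν be a probability measure on X₂ with ν(y) > 0 for all y ∈ X₂. Then there exist an integer k ≥ 1, sets ∅ = S₀ ⊊ S₁ ⊊ ⋯ ⊊ S_k = X₁, and real numbers 0 < β₁ < β₂ < ⋯ < β_k such that: (1) β_i·μ(S_i ∖ S_{i−1}) = ν(N(S_i) ∖ N(S_{i−1})) for all i ∈ {1,…,k}; and (2) for all i ∈ {1,…,k} and all A ⊆ X₁ ∖ S_{i−1}, β_i·μ(A) ≤ ν(N(A) ∖ N(S_{i−1})). -/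
noncomputable section

/-- A probability measure on a finite set, given by its point masses. -/
def IsProbOn {X : Type*} [Fintype X] (μ : X → ℝ) : Prop :=
  (∀ x, 0 ≤ μ x) ∧ (∑ x, μ x) = 1

/-- The neighborhood `N(S) ⊆ X₂` of a set `S ⊆ X₁` in a bipartite graph with
parts `X₁, X₂` and adjacency relation `E`. -/
def nbhd {X₁ X₂ : Type*} [Fintype X₂] (E : X₁ → X₂ → Prop) (S : Finset X₁) :
    Finset X₂ :=
  letI := Classical.decPred fun y : X₂ => ∃ x ∈ S, E x y
  Finset.univ.filter (fun y => ∃ x ∈ S, E x y)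

/-- The weight `w(A ∖ B)` of a set difference. -/
def sdiffSum {Y : Type*} (w : Y → ℝ) (A B : Finset Y) : ℝ :=
  letI := Classical.decEq Y
  ∑ y ∈ A \ B, w y

open Finset Classical

set_option linter.unusedSectionVars false

lemma sdiffSum_eq {Y : Type*} [DecidableEq Y] (w : Y → ℝ) (A B : Finset Y) :
    sdiffSum w A B = ∑ y ∈ A \ B, w y := by
  unfold sdiffSum
  exact Finset.sum_congr (by ext y; simp) fun _ _ => rfl

section Aux

variable {X₁ X₂ : Type} [Fintype X₁] [Fintype X₂]

lemma mem_nbhd (E : X₁ → X₂ → Prop) {y : X₂} {S : Finset X₁} :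
    y ∈ nbhd E S ↔ ∃ x ∈ S, E x y := by
  simp [nbhd]

variable (E : X₁ → X₂ → Prop) (μ : X₁ → ℝ) (ν : X₂ → ℝ)

def msum (A : Finset X₁) : ℝ := ∑ x ∈ A, μ x

def gg (T A : Finset X₁) : ℝ := sdiffSum ν (nbhd E A) (nbhd E T)

def cand (T : Finset X₁) : Finset (Finset X₁) :=
  univ.filter (fun A => A.Nonempty ∧ Disjoint A T)

def bmin (T : Finset X₁) : ℝ :=
  if h : (cand T).Nonempty then (cand T).inf' h (fun A => gg E ν T A / msum μ A) else 0

def smax (T : Finset X₁) : Finset X₁ :=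
  ((cand T).filter (fun A => gg E ν T A ≤ bmin E μ ν T * msum μ A)).sup id

lemma msum_pos (hμpos : ∀ x, 0 < μ x) {A : Finset X₁} (hA : A.Nonempty) : 0 < msum μ A :=
  Finset.sum_pos (fun x _ => hμpos x) hA

lemma msum_nonneg (hμpos : ∀ x, 0 < μ x) (A : Finset X₁) : 0 ≤ msum μ A :=
  Finset.sum_nonneg fun x _ => (hμpos x).le

lemma gg_nonneg (hν0 : ∀ y, 0 ≤ ν y) (T A : Finset X₁) : 0 ≤ gg E ν T A := by
  rw [gg, sdiffSum_eq]
  exact Finset.sum_nonneg fun y _ => hν0 y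

lemma nbhd_empty : nbhd E (∅ : Finset X₁) = ∅ := by
  ext y; simp [mem_nbhd]

lemma gg_empty (T : Finset X₁) : gg E ν T ∅ = 0 := by
  rw [gg, sdiffSum_eq, nbhd_empty]
  simp

lemma mem_cand {T A : Finset X₁} : A ∈ cand T ↔ A.Nonempty ∧ Disjoint A T := by
  simp [cand]

lemma cand_nonempty {T : Finset X₁} (hT : T ≠ univ) : (cand T).Nonempty := by
  refine ⟨Tᶜ, mem_cand.mpr ⟨?_, disjoint_compl_left⟩⟩
  rwa [← Finset.compl_ne_univ_iff_nonempty, compl_compl]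

lemma bmin_mul_le (hμpos : ∀ x, 0 < μ x) {T A : Finset X₁} (hT : T ≠ univ) (hA : A ∈ cand T) :
    bmin E μ ν T * msum μ A ≤ gg E ν T A := by
  rw [bmin, dif_pos (cand_nonempty hT)]
  have h := Finset.inf'_le (fun A => gg E ν T A / msum μ A) hA
  have hm : 0 < msum μ A := msum_pos μ hμpos (mem_cand.mp hA).1
  exact (le_div_iff₀ hm).mp h

lemma exists_bmin (hμpos : ∀ x, 0 < μ x) {T : Finset X₁} (hT : T ≠ univ) :
    ∃ A ∈ cand T, gg E ν T A = bmin E μ ν T * msum μ A := by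
  obtain ⟨A, hA, hEq⟩ :=
    Finset.exists_mem_eq_inf' (cand_nonempty hT) (fun A => gg E ν T A / msum μ A)
  refine ⟨A, hA, ?_⟩
  have hm : 0 < msum μ A := msum_pos μ hμpos (mem_cand.mp hA).1
  rw [bmin, dif_pos (cand_nonempty hT), hEq]
  field_simp

lemma gg_submod (hν0 : ∀ y, 0 ≤ ν y) (T A B : Finset X₁) :
    gg E ν T (A ∪ B) + gg E ν T (A ∩ B) ≤ gg E ν T A + gg E ν T B := by
  simp only [gg, sdiffSum_eq]
  have h1 : nbhd E (A ∪ B) \ nbhd E T = (nbhd E A \ nbhd E T) ∪ (nbhd E B \ nbhd E T) := by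
    ext y
    simp only [Finset.mem_sdiff, Finset.mem_union, mem_nbhd, Finset.mem_union]
    constructor
    · rintro ⟨⟨x, hx, hxy⟩, hn⟩
      rcases hx with h | h
      · exact Or.inl ⟨⟨x, h, hxy⟩, hn⟩
      · exact Or.inr ⟨⟨x, h, hxy⟩, hn⟩
    · rintro (⟨⟨x, hx, hxy⟩, hn⟩ | ⟨⟨x, hx, hxy⟩, hn⟩)
      · exact ⟨⟨x, Or.inl hx, hxy⟩, hn⟩
      · exact ⟨⟨x, Or.inr hx, hxy⟩, hn⟩
  have h2 : nbhd E (A ∩ B) \ nbhd E T ⊆ (nbhd E A \ nbhd E T) ∩ (nbhd E B \ nbhd E T) := by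
    intro y hy
    simp only [Finset.mem_sdiff, Finset.mem_inter, mem_nbhd] at *
    obtain ⟨⟨x, hx, hxy⟩, hn⟩ := hy
    obtain ⟨hxA, hxB⟩ := hx
    exact ⟨⟨⟨x, hxA, hxy⟩, hn⟩, ⟨⟨x, hxB, hxy⟩, hn⟩⟩
  have h3 : ∑ y ∈ nbhd E (A ∩ B) \ nbhd E T, ν y
      ≤ ∑ y ∈ (nbhd E A \ nbhd E T) ∩ (nbhd E B \ nbhd E T), ν y :=
    Finset.sum_le_sum_of_subset_of_nonneg h2 (fun y _ _ => hν0 y)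
  have h4 := Finset.sum_union_inter (s₁ := nbhd E A \ nbhd E T)
    (s₂ := nbhd E B \ nbhd E T) (f := ν)
  rw [h1]
  linarith

def isMin (T A : Finset X₁) : Prop :=
  Disjoint A T ∧ gg E ν T A ≤ bmin E μ ν T * msum μ A

lemma isMin_empty (T : Finset X₁) : isMin E μ ν T ∅ := by
  refine ⟨Finset.disjoint_empty_left _, ?_⟩
  rw [gg_empty]
  simp [msum]

lemma isMin_union (hμpos : ∀ x, 0 < μ x) (hν0 : ∀ y, 0 ≤ ν y) {T A B : Finset X₁}
    (hT : T ≠ univ) (hA : isMin E μ ν T A) (hB : isMin E μ ν T B) :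
    isMin E μ ν T (A ∪ B) := by
  obtain ⟨hdA, hgA⟩ := hA
  obtain ⟨hdB, hgB⟩ := hB
  refine ⟨Finset.disjoint_union_left.mpr ⟨hdA, hdB⟩, ?_⟩
  have hsub := gg_submod E ν hν0 T A B
  have hint : bmin E μ ν T * msum μ (A ∩ B) ≤ gg E ν T (A ∩ B) := by
    rcases (A ∩ B).eq_empty_or_nonempty with h | h
    · rw [h, gg_empty]; simp [msum]
    · exact bmin_mul_le E μ ν hμpos hT (mem_cand.mpr ⟨h,
        hdA.mono_left (Finset.inter_subset_left)⟩)
  have hmod : msum μ (A ∪ B) + msum μ (A ∩ B) = msum μ A + msum μ B :=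
    Finset.sum_union_inter
  have hkey : bmin E μ ν T * msum μ (A ∪ B) + bmin E μ ν T * msum μ (A ∩ B)
      = bmin E μ ν T * msum μ A + bmin E μ ν T * msum μ B := by
    rw [← mul_add, ← mul_add, hmod]
  linarith

lemma isMin_smax (hμpos : ∀ x, 0 < μ x) (hν0 : ∀ y, 0 ≤ ν y) {T : Finset X₁} (hT : T ≠ univ) :
    isMin E μ ν T (smax E μ ν T) := by
  apply Finset.sup_induction
  · exact isMin_empty E μ ν T
  · exact fun a ha b hb => isMin_union E μ ν hμpos hν0 hT ha hb
  · intro A hA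
    rw [Finset.mem_filter, mem_cand] at hA
    exact ⟨hA.1.2, hA.2⟩

lemma subset_smax {T A : Finset X₁} (hA : A ∈ cand T)
    (h : gg E ν T A ≤ bmin E μ ν T * msum μ A) : A ⊆ smax E μ ν T :=
  Finset.le_sup (f := id) (Finset.mem_filter.mpr ⟨hA, h⟩)

lemma smax_nonempty (hμpos : ∀ x, 0 < μ x) {T : Finset X₁} (hT : T ≠ univ) :
    (smax E μ ν T).Nonempty := by
  obtain ⟨A, hA, hEq⟩ := exists_bmin E μ ν hμpos hT
  exact ((mem_cand.mp hA).1).mono (subset_smax E μ ν hA (le_of_eq hEq))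

lemma gg_smax (hμpos : ∀ x, 0 < μ x) (hν0 : ∀ y, 0 ≤ ν y) {T : Finset X₁} (hT : T ≠ univ) :
    gg E ν T (smax E μ ν T) = bmin E μ ν T * msum μ (smax E μ ν T) :=
  le_antisymm (isMin_smax E μ ν hμpos hν0 hT).2
    (bmin_mul_le E μ ν hμpos hT (mem_cand.mpr
      ⟨smax_nonempty E μ ν hμpos hT, (isMin_smax E μ ν hμpos hν0 hT).1⟩))


lemma bmin_lt (hμpos : ∀ x, 0 < μ x) (hν0 : ∀ y, 0 ≤ ν y) {T : Finset X₁}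
    (hT : T ≠ univ) (hT' : T ∪ smax E μ ν T ≠ univ) :
    bmin E μ ν T < bmin E μ ν (T ∪ smax E μ ν T) := by
  set M := smax E μ ν T with hM
  set T' := T ∪ M with hT'def
  by_contra hle
  push_neg at hle
  obtain ⟨A, hA, hEq⟩ := exists_bmin E μ ν hμpos hT'
  obtain ⟨hAne, hAd⟩ := mem_cand.mp hA
  have hAdM : Disjoint A M := hAd.mono_right Finset.subset_union_right
  have hAdT : Disjoint A T := hAd.mono_right Finset.subset_union_left
  have hMdT : Disjoint M T := (isMin_smax E μ ν hμpos hν0 hT).1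
  have h1 : gg E ν T' A ≤ bmin E μ ν T * msum μ A := by
    rw [hEq]
    exact mul_le_mul_of_nonneg_right hle (msum_nonneg μ hμpos A)
  have h2 : gg E ν T (A ∪ M) ≤ gg E ν T' A + gg E ν T M := by
    simp only [gg, sdiffSum_eq]
    have hsub : nbhd E (A ∪ M) \ nbhd E T
        ⊆ (nbhd E A \ nbhd E T') ∪ (nbhd E M \ nbhd E T) := by
      intro y hy
      simp only [Finset.mem_sdiff, Finset.mem_union, mem_nbhd] at *
      obtain ⟨⟨x, hx, hxy⟩, hn⟩ := hy
      rcases hx with hx | hx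
      · by_cases hyM : ∃ x ∈ M, E x y
        · exact Or.inr ⟨hyM, hn⟩
        · refine Or.inl ⟨⟨x, hx, hxy⟩, ?_⟩
          rintro ⟨x', hx', hxy'⟩
          rcases Finset.mem_union.mp hx' with h | h
          · exact hn ⟨x', h, hxy'⟩
          · exact hyM ⟨x', h, hxy'⟩
      · exact Or.inr ⟨⟨x, hx, hxy⟩, hn⟩
    have hstep : ∑ y ∈ nbhd E (A ∪ M) \ nbhd E T, ν y
        ≤ ∑ y ∈ (nbhd E A \ nbhd E T') ∪ (nbhd E M \ nbhd E T), ν y :=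
      Finset.sum_le_sum_of_subset_of_nonneg hsub (fun y _ _ => hν0 y)
    have h4 := Finset.sum_union_inter (s₁ := nbhd E A \ nbhd E T')
      (s₂ := nbhd E M \ nbhd E T) (f := ν)
    have h5 : 0 ≤ ∑ y ∈ (nbhd E A \ nbhd E T') ∩ (nbhd E M \ nbhd E T), ν y :=
      Finset.sum_nonneg fun y _ => hν0 y
    linarith
  have hgM := gg_smax E μ ν hμpos hν0 hT
  have h3 : gg E ν T (A ∪ M) ≤ bmin E μ ν T * msum μ (A ∪ M) := by
    have hmsum : msum μ (A ∪ M) = msum μ A + msum μ M := Finset.sum_union hAdM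
    rw [hmsum, mul_add]
    linarith
  have hsubM : A ∪ M ⊆ M := by
    refine subset_smax E μ ν (mem_cand.mpr ⟨?_, ?_⟩) h3
    · exact hAne.mono Finset.subset_union_left
    · exact Finset.disjoint_union_left.mpr ⟨hAdT, hMdT⟩
  obtain ⟨x, hx⟩ := hAne
  exact (Finset.disjoint_left.mp hAdM) hx (hsubM (Finset.mem_union_left _ hx))

lemma bmin_empty_pos [Nonempty X₁] (hE : ∀ x, ∃ y, E x y) (hμpos : ∀ x, 0 < μ x)
    (hνpos : ∀ y, 0 < ν y) : 0 < bmin E μ ν (∅ : Finset X₁) := by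
  have hne : (∅ : Finset X₁) ≠ univ := by
    simpa using (Finset.univ_nonempty (α := X₁)).ne_empty.symm
  obtain ⟨A, hA, hEq⟩ := exists_bmin E μ ν hμpos hne
  obtain ⟨hAne, -⟩ := mem_cand.mp hA
  have hgpos : 0 < gg E ν ∅ A := by
    rw [gg, sdiffSum_eq, nbhd_empty, Finset.sdiff_empty]
    apply Finset.sum_pos (fun y _ => hνpos y)
    obtain ⟨x, hx⟩ := hAne
    obtain ⟨y, hy⟩ := hE x
    exact ⟨y, (mem_nbhd E).mpr ⟨x, hx, hy⟩⟩
  have hm := msum_pos μ hμpos hAne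
  nlinarith [hEq]

def seqS : ℕ → Finset X₁
  | 0 => ∅
  | n + 1 => seqS n ∪ smax E μ ν (seqS n)

lemma seqS_card (hμpos : ∀ x, 0 < μ x) (hν0 : ∀ y, 0 ≤ ν y) :
    ∀ n, seqS E μ ν n = univ ∨ n ≤ (seqS E μ ν n).card := by
  intro n
  induction n with
  | zero => right; simp
  | succ n ih =>
    rcases eq_or_ne (seqS E μ ν n) univ with h | h
    · left; simp [seqS, h]
    · rcases ih with h' | h'
      · exact absurd h' h
      · right
        have hd : Disjoint (seqS E μ ν n) (smax E μ ν (seqS E μ ν n)) :=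
          ((isMin_smax E μ ν hμpos hν0 h).1).symm
        have hcard : (seqS E μ ν (n + 1)).card
            = (seqS E μ ν n).card + (smax E μ ν (seqS E μ ν n)).card := by
          show (seqS E μ ν n ∪ smax E μ ν (seqS E μ ν n)).card = _
          exact Finset.card_union_of_disjoint hd
        have hpos := (smax_nonempty E μ ν hμpos h).card_pos
        omega

lemma seqS_univ (hμpos : ∀ x, 0 < μ x) (hν0 : ∀ y, 0 ≤ ν y) :
    ∃ n, seqS E μ ν n = univ := by
  refine ⟨Fintype.card X₁, ?_⟩
  rcases seqS_card E μ ν hμpos hν0 (Fintype.card X₁) with h | h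
  · exact h
  · exact Finset.eq_univ_of_card _
      (le_antisymm (Finset.card_le_univ _ |>.trans_eq (Finset.card_univ)) h)

end Aux

/-- a Hall-type decomposition for bipartite graphs. Given a finite
bipartite graph with parts `X₁, X₂` (adjacency `E`) in which every vertex of `X₁`
has a neighbor, and fully supported probability measures `μ` on `X₁` and `ν` on
`X₂`, there are sets `∅ = S₀ ⊊ S₁ ⊊ ⋯ ⊊ S_k = X₁` and reals
`0 < β₁ < β₂ < ⋯ < β_k` with:
(1) `β_i·μ(S_i ∖ S_{i−1}) = ν(N(S_i) ∖ N(S_{i−1}))` for `1 ≤ i ≤ k`; and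
(2) `β_i·μ(A) ≤ ν(N(A) ∖ N(S_{i−1}))` for all `1 ≤ i ≤ k` and `A ⊆ X₁ ∖ S_{i−1}`. -/
theorem stmt15 {X₁ X₂ : Type} [Fintype X₁] [Fintype X₂] [Nonempty X₁]
    (E : X₁ → X₂ → Prop) (hE : ∀ x : X₁, ∃ y : X₂, E x y)
    (μ : X₁ → ℝ) (hμ : IsProbOn μ) (hμpos : ∀ x, 0 < μ x)
    (ν : X₂ → ℝ) (hν : IsProbOn ν) (hνpos : ∀ y, 0 < ν y) :
    ∃ (k : ℕ) (S : ℕ → Finset X₁) (β : ℕ → ℝ),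
      1 ≤ k ∧ S 0 = ∅ ∧ S k = Finset.univ ∧
      (∀ i < k, S i ⊂ S (i + 1)) ∧
      0 < β 1 ∧
      (∀ i, 1 ≤ i → i < k → β i < β (i + 1)) ∧
      (∀ i, 1 ≤ i → i ≤ k →
        β i * sdiffSum μ (S i) (S (i - 1)) =
          sdiffSum ν (nbhd E (S i)) (nbhd E (S (i - 1)))) ∧
      (∀ i, 1 ≤ i → i ≤ k → ∀ A : Finset X₁, Disjoint A (S (i - 1)) →
        β i * (∑ x ∈ A, μ x) ≤ sdiffSum ν (nbhd E A) (nbhd E (S (i - 1)))) := by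

  have hν0 : ∀ y, 0 ≤ ν y := fun y => (hνpos y).le
  have hex := seqS_univ E μ ν hμpos hν0
  have hkspec := Nat.find_spec hex
  set k := Nat.find hex with hk
  have hne_of_lt : ∀ i, i < k → seqS E μ ν i ≠ univ := fun i hi => Nat.find_min hex hi
  have hk1 : 1 ≤ k := by
    rcases Nat.eq_zero_or_pos k with h0 | h
    · exfalso
      rw [h0] at hkspec
      have : (∅ : Finset X₁) = univ := hkspec
      exact (Finset.univ_nonempty (α := X₁)).ne_empty this.symm
    · exact h
  refine ⟨k, seqS E μ ν, fun i => bmin E μ ν (seqS E μ ν (i - 1)), hk1, rfl, hkspec,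
    ?_, ?_, ?_, ?_, ?_⟩
  · -- strict chain
    intro i hi
    have hne := hne_of_lt i hi
    have hd : Disjoint (seqS E μ ν i) (smax E μ ν (seqS E μ ν i)) :=
      ((isMin_smax E μ ν hμpos hν0 hne).1).symm
    obtain ⟨x, hx⟩ := smax_nonempty E μ ν hμpos hne
    have hstep : seqS E μ ν (i + 1) = seqS E μ ν i ∪ smax E μ ν (seqS E μ ν i) := rfl
    rw [hstep]
    refine (Finset.ssubset_iff_of_subset Finset.subset_union_left).mpr
      ⟨x, Finset.mem_union_right _ hx, Finset.disjoint_right.mp hd hx⟩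
  · -- 0 < β 1
    exact bmin_empty_pos E μ ν hE hμpos hνpos
  · -- β monotone
    intro i h1i hik
    cases i with
    | zero => omega
    | succ j =>
      have hstep : seqS E μ ν (j + 1) = seqS E μ ν j ∪ smax E μ ν (seqS E μ ν j) := rfl
      have h1 : seqS E μ ν j ≠ univ := hne_of_lt j (by omega)
      have h2 : seqS E μ ν (j + 1) ≠ univ := hne_of_lt _ hik
      simp only [Nat.add_sub_cancel]
      rw [hstep]
      exact bmin_lt E μ ν hμpos hν0 h1 (hstep ▸ h2)
  · -- (1)
    intro i h1i hik
    cases i with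
    | zero => omega
    | succ j =>
      have hj : seqS E μ ν j ≠ univ := hne_of_lt j (by omega)
      set T := seqS E μ ν j with hT
      set M := smax E μ ν T with hM
      have hstep : seqS E μ ν (j + 1) = T ∪ M := rfl
      have hd : Disjoint T M := ((isMin_smax E μ ν hμpos hν0 hj).1).symm
      simp only [Nat.add_sub_cancel]
      rw [sdiffSum_eq, sdiffSum_eq, hstep]
      have e1 : (T ∪ M) \ T = M := by
        ext x
        simp only [Finset.mem_sdiff, Finset.mem_union]
        constructor
        · rintro ⟨h | h, hn⟩
          · exact absurd h hn
          · exact h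
        · intro h
          exact ⟨Or.inr h, Finset.disjoint_right.mp hd h⟩
      have e2 : nbhd E (T ∪ M) \ nbhd E T = nbhd E M \ nbhd E T := by
        ext y
        simp only [Finset.mem_sdiff, mem_nbhd]
        constructor
        · rintro ⟨⟨x, hx, hxy⟩, hn⟩
          rcases Finset.mem_union.mp hx with h | h
          · exact absurd ⟨x, h, hxy⟩ hn
          · exact ⟨⟨x, h, hxy⟩, hn⟩
        · rintro ⟨⟨x, hx, hxy⟩, hn⟩
          exact ⟨⟨x, Finset.mem_union_right _ hx, hxy⟩, hn⟩
      rw [e1, e2]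
      have hgs := gg_smax E μ ν hμpos hν0 hj
      rw [gg, sdiffSum_eq] at hgs
      rw [← hM] at hgs
      rw [hgs, ← hT]
      rfl
  · -- (2)
    intro i h1i hik A hdisj
    cases i with
    | zero => omega
    | succ j =>
      simp only [Nat.add_sub_cancel] at hdisj ⊢
      have hj : seqS E μ ν j ≠ univ := hne_of_lt j (by omega)
      rcases A.eq_empty_or_nonempty with rfl | hAne
      · rw [sdiffSum_eq, nbhd_empty]
        simp
      · have hle := bmin_mul_le E μ ν hμpos hj (mem_cand.mpr ⟨hAne, hdisj⟩)
        rw [gg, sdiffSum_eq] at hle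
        exact hle
end
end

section
/- Let (X,d) be a finite metric space, h a chaining functional of log-concave type, ρ a probability measure on X, and s ∈ X a point with 0 < ρ(s) < 1. Let ρ' be the conditional probability measure of ρ on X ∖ {s}, i.e., ρ'(A) := ρ(A ∖ {s})/(1 − ρ(s)) for A ⊆ X, and set α := 1/(1 − ρ(s)). Then for every t ∈ X, ∫₀^∞ h(ρ'(B(t,r))) dr ≥ ∫₀^∞ h(ρ(B(t,r))) dr − diam(X)·(α − 1). -/
/-!
Log-concavity together with `f 0 = 1` makes `f` submultiplicative, so `F(a) ≤ f(a)`; since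
`f ≥ f(a + c)` on `(a, a + c]`, this gives `(1 + c) F(a + c) ≤ F(a)`, i.e.
`h(q / (1 + c)) ≤ h(q) + c`. If the ball `B(t, r)` contains `s`, conditioning can only lower its
mass (`ρ(B) ≤ 1`), so `h(ρ(B)) ≤ h(ρ'(B))`. Otherwise `ρ(B) = ρ'(B) / α`, so `h` grows by at
most `α - 1`, and this happens only for `r < d(t, s) ≤ diam X`.
-/

open MeasureTheory

noncomputable section

def IsLogConcaveOn (f : ℝ → ℝ) : Prop :=
  ∀ x ∈ Set.Ici (0:ℝ), ∀ y ∈ Set.Ici (0:ℝ), ∀ t ∈ Set.Icc (0:ℝ) 1,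
    f x ^ t * f y ^ (1 - t) ≤ f (t * x + (1 - t) * y)

structure IsChainingDensity (f : ℝ → ℝ) : Prop where
  nonneg : ∀ t : ℝ, 0 ≤ t → 0 ≤ f t
  continuousOn : ContinuousOn f (Set.Ici 0)
  antitoneOn : AntitoneOn f (Set.Ici 0)
  logConcave : IsLogConcaveOn f
  total : (∫ t in Set.Ioi (0:ℝ), f t) = 1
  normalized : f 0 = 1

/-- The complementary cumulative distribution function `F(s) = ∫_s^∞ f(t) dt`. -/
def ccdf (f : ℝ → ℝ) (s : ℝ) : ℝ := ∫ t in Set.Ioi s, f t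

/-- The chaining functional `h(p) = F⁻¹(p)`, defined on `(0,1]` as the least
`s ≥ 0` with `F(s) ≤ p`. -/
def chainFn (f : ℝ → ℝ) (p : ℝ) : ℝ := sInf {s : ℝ | 0 ≤ s ∧ ccdf f s ≤ p}

open scoped ENNReal

/-- The extended (`[0,∞]`-valued) chaining functional: `h(p)` is the least `s ≥ 0`
with `F(s) ≤ p`, and `+∞` when no such `s` exists (in particular
`h(0) = lim_{p→0⁺} h(p) ∈ (0,∞]`). -/
def chainFnE (f : ℝ → ℝ) (p : ℝ) : ℝ≥0∞ :=
  sInf {t : ℝ≥0∞ | ∃ s : ℝ, 0 ≤ s ∧ ccdf f s ≤ p ∧ t = ENNReal.ofReal s}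

/-- The mass `μ(B(x,r))` of the closed ball of radius `r` around `x`. -/
def ballMass {X : Type*} [MetricSpace X] [Fintype X] (μ : X → ℝ) (x : X) (r : ℝ) : ℝ :=
  ∑ y ∈ Finset.univ.filter (fun y => dist x y ≤ r), μ y

/-- `∫₀^∞ h(μ(B(x,r))) dr`, valued in `[0,∞]`. -/
def Hint {X : Type*} [MetricSpace X] [Fintype X] (f : ℝ → ℝ) (μ : X → ℝ) (x : X) : ℝ≥0∞ :=
  ∫⁻ r in Set.Ioi (0:ℝ), chainFnE f (ballMass μ x r)

def fdiam (X : Type*) [MetricSpace X] : ℝ := Metric.diam (Set.univ : Set X)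

/-- The conditional probability measure of `ρ` on `X ∖ {s}`:
`ρ'(x) = ρ(x)/(1 − ρ(s))` for `x ≠ s` and `ρ'(s) = 0`. -/
def dropPoint {X : Type*} (ρ : X → ℝ) (s : X) : X → ℝ :=
  fun x => letI := Classical.decEq X; if x = s then 0 else ρ x / (1 - ρ s)

open Set

namespace IsLogConcaveOn

variable {f : ℝ → ℝ}

theorem map_add_le_mul (hf : IsLogConcaveOn f) (h0 : f 0 = 1)
    (hnn : ∀ t, 0 ≤ t → 0 ≤ f t) {x y : ℝ} (hx : 0 ≤ x) (hy : 0 ≤ y) :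
    f (x + y) ≤ f x * f y := by
  rcases (add_nonneg hx hy).eq_or_lt with hxy | hxy
  · obtain ⟨rfl, rfl⟩ : x = 0 ∧ y = 0 := ⟨by linarith, by linarith⟩
    simp [h0]
  set t := x / (x + y)
  have ht : t ∈ Icc (0 : ℝ) 1 :=
    ⟨div_nonneg hx hxy.le, div_le_one_of_le₀ (by linarith) hxy.le⟩
  have ht' : 1 - t ∈ Icc (0 : ℝ) 1 := ⟨by linarith [ht.2], by linarith [ht.1]⟩
  have hfx : f (x + y) ^ t ≤ f x := by
    have := hf (x + y) hxy.le 0 self_mem_Ici t ht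
    rwa [h0, Real.one_rpow, mul_one, mul_zero, add_zero,
      div_mul_cancel₀ _ hxy.ne'] at this
  have hfy : f (x + y) ^ (1 - t) ≤ f y := by
    have := hf (x + y) hxy.le 0 self_mem_Ici (1 - t) ht'
    rwa [h0, Real.one_rpow, mul_one, mul_zero, add_zero, sub_mul, one_mul,
      div_mul_cancel₀ _ hxy.ne', add_sub_cancel_left] at this
  calc f (x + y) = f (x + y) ^ t * f (x + y) ^ (1 - t) := by
        rw [← Real.rpow_add' (hnn _ hxy.le) (by norm_num), add_sub_cancel, Real.rpow_one]
    _ ≤ f x * f y := mul_le_mul hfx hfy (Real.rpow_nonneg (hnn _ hxy.le) _) (hnn x hx)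

end IsLogConcaveOn

namespace IsChainingDensity

variable {f : ℝ → ℝ}

theorem integrableOn_Ioi (hf : IsChainingDensity f) {b : ℝ} (hb : 0 ≤ b) :
    IntegrableOn f (Ioi b) := by
  refine IntegrableOn.mono_set ?_ (Ioi_subset_Ioi hb)
  by_contra h
  simpa [integral_undef h] using hf.total

theorem ccdf_le (hf : IsChainingDensity f) {b : ℝ} (hb : 0 ≤ b) : ccdf f b ≤ f b := by
  have hshift := measurePreserving_add_right (volume : Measure ℝ) b
  have hemb := measurableEmbedding_addRight (G := ℝ) b
  have hpre : (· + b) ⁻¹' Ioi b = Ioi (0 : ℝ) := by ext; simp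
  have hint : IntegrableOn (fun u => f (u + b)) (Ioi 0) := by
    rw [← hpre]
    exact (hshift.integrableOn_comp_preimage hemb).2 (hf.integrableOn_Ioi hb)
  calc ccdf f b = ∫ u in Ioi 0, f (u + b) := by
        rw [ccdf, ← hshift.setIntegral_preimage_emb hemb, hpre]
    _ ≤ ∫ u in Ioi 0, f u * f b :=
        setIntegral_mono_on hint ((hf.integrableOn_Ioi le_rfl).mul_const _) measurableSet_Ioi
          fun u hu => hf.logConcave.map_add_le_mul hf.normalized hf.nonneg (le_of_lt hu) hb
    _ = f b := by rw [integral_mul_const, hf.total, one_mul]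

theorem one_add_mul_ccdf_add_le (hf : IsChainingDensity f) {a c : ℝ} (ha : 0 ≤ a)
    (hc : 0 ≤ c) : (1 + c) * ccdf f (a + c) ≤ ccdf f a := by
  have hIoc : IntegrableOn f (Ioc a (a + c)) :=
    (hf.integrableOn_Ioi ha).mono_set Ioc_subset_Ioi_self
  have hsplit : ccdf f a = (∫ u in Ioc a (a + c), f u) + ccdf f (a + c) := by
    rw [ccdf, ccdf, ← Ioc_union_Ioi_eq_Ioi (by linarith : a ≤ a + c)]
    exact setIntegral_union (Ioc_disjoint_Ioi le_rfl) measurableSet_Ioi hIoc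
      (hf.integrableOn_Ioi (by linarith))
  have hlow : c * f (a + c) ≤ ∫ u in Ioc a (a + c), f u := by
    have := setIntegral_mono_on (integrableOn_const measure_Ioc_lt_top.ne) hIoc
      measurableSet_Ioc fun u hu =>
        hf.antitoneOn (mem_Ici.2 (ha.trans hu.1.le)) (mem_Ici.2 (by linarith)) hu.2
    rwa [setIntegral_const, Real.volume_real_Ioc_of_le (by linarith), add_sub_cancel_left,
      smul_eq_mul] at this
  nlinarith [hf.ccdf_le (add_nonneg ha hc)]

theorem chainFnE_div_le_add (hf : IsChainingDensity f) (q : ℝ) {c : ℝ} (hc : 0 ≤ c) :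
    chainFnE f (q / (1 + c)) ≤ chainFnE f q + ENNReal.ofReal c := by
  unfold chainFnE
  rw [ENNReal.sInf_add]
  refine le_iInf₂ ?_
  rintro _ ⟨x, hx, hxq, rfl⟩
  rw [← ENNReal.ofReal_add hx hc]
  refine sInf_le ⟨x + c, add_nonneg hx hc, ?_, rfl⟩
  rw [le_div_iff₀ (by linarith)]
  linarith [hf.one_add_mul_ccdf_add_le hx hc]

end IsChainingDensity

theorem chainFnE_antitone (f : ℝ → ℝ) : Antitone (chainFnE f) := by
  intro p q hpq
  refine sInf_le_sInf ?_
  rintro _ ⟨x, hx, hxp, rfl⟩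
  exact ⟨x, hx, hxp.trans hpq, rfl⟩

theorem sum_dropPoint {X : Type*} [DecidableEq X] (ρ : X → ℝ) (s : X) (S : Finset X) :
    ∑ x ∈ S, dropPoint ρ s x = (∑ x ∈ S.erase s, ρ x) / (1 - ρ s) := by
  rw [← Finset.sum_erase S (by simp [dropPoint] : dropPoint ρ s s = 0), Finset.sum_div]
  exact Finset.sum_congr rfl fun x hx => by simp [dropPoint, Finset.ne_of_mem_erase hx]

section FiniteMetric

variable {X : Type*} [MetricSpace X] [Fintype X]

theorem ballMass_le_one {μ : X → ℝ} (hμ : IsProbOn μ) (x : X) (r : ℝ) : ballMass μ x r ≤ 1 :=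
  hμ.2 ▸ Finset.sum_le_sum_of_subset_of_nonneg (Finset.subset_univ _) fun y _ _ => hμ.1 y

theorem chainFnE_ballMass_le_dropPoint {f : ℝ → ℝ} (hf : IsChainingDensity f) {ρ : X → ℝ}
    (hρ : IsProbOn ρ) {s : X} (hs1 : ρ s < 1) (t : X) (r : ℝ) :
    chainFnE f (ballMass ρ t r) ≤ chainFnE f (ballMass (dropPoint ρ s) t r) +
      (Iio (dist t s)).indicator (fun _ => ENNReal.ofReal (1 / (1 - ρ s) - 1)) r := by
  classical
  have hρs : 0 < 1 - ρ s := by linarith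
  set B := Finset.univ.filter fun y => dist t y ≤ r
  have hB : ∑ x ∈ B, ρ x = ballMass ρ t r := rfl
  have hmass : ballMass (dropPoint ρ s) t r = (∑ x ∈ B.erase s, ρ x) / (1 - ρ s) :=
    sum_dropPoint ρ s B
  by_cases hr : dist t s ≤ r
  · have hle : ballMass (dropPoint ρ s) t r ≤ ballMass ρ t r := by
      rw [hmass, Finset.sum_erase_eq_sub (by simpa [B] using hr), hB, div_le_iff₀ hρs]
      nlinarith [ballMass_le_one hρ t r, hρ.1 s]
    rw [indicator_of_notMem (show r ∉ Iio (dist t s) from not_lt.2 hr), add_zero]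
    exact chainFnE_antitone f hle
  · rw [indicator_of_mem (show r ∈ Iio (dist t s) from not_le.1 hr)]
    have hc : 0 ≤ 1 / (1 - ρ s) - 1 := by
      rw [sub_nonneg, le_div_iff₀ hρs]; linarith [hρ.1 s]
    convert hf.chainFnE_div_le_add _ hc using 2
    rw [hmass, Finset.erase_eq_of_notMem (by simpa [B] using hr), hB]
    field_simp
    ring

end FiniteMetric

theorem setLIntegral_Ioi_add_indicator_Iio (g : ℝ → ℝ≥0∞) (a : ℝ≥0∞) (D : ℝ) :
    ∫⁻ r in Ioi 0, (g r + (Iio D).indicator (fun _ => a) r) =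
      (∫⁻ r in Ioi 0, g r) + a * ENNReal.ofReal D := by
  rw [lintegral_add_right _ (measurable_const.indicator measurableSet_Iio),
    lintegral_indicator measurableSet_Iio, setLIntegral_const,
    Measure.restrict_apply measurableSet_Iio, Iio_inter_Ioi, Real.volume_Ioo, sub_zero]

theorem stmt16_general {X : Type*} [MetricSpace X] [Fintype X]
    (f : ℝ → ℝ) (hf : IsChainingDensity f)
    (ρ : X → ℝ) (hρ : IsProbOn ρ) (s : X) (hs1 : ρ s < 1) :
    ∀ t : X,
      Hint f ρ t - ENNReal.ofReal (fdiam X * (1 / (1 - ρ s) - 1)) ≤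
        Hint f (dropPoint ρ s) t := by
  intro t
  set c := 1 / (1 - ρ s) - 1
  have hc : 0 ≤ c := by
    rw [sub_nonneg, le_div_iff₀ (by linarith)]; linarith [hρ.1 s]
  have hdist : dist t s ≤ fdiam X :=
    Metric.dist_le_diam_of_mem finite_univ.isBounded (mem_univ t) (mem_univ s)
  rw [tsub_le_iff_right]
  calc Hint f ρ t
      ≤ ∫⁻ r in Ioi 0, (chainFnE f (ballMass (dropPoint ρ s) t r) +
          (Iio (dist t s)).indicator (fun _ => ENNReal.ofReal c) r) :=
        lintegral_mono fun r => chainFnE_ballMass_le_dropPoint hf hρ hs1 t r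
    _ = Hint f (dropPoint ρ s) t + ENNReal.ofReal c * ENNReal.ofReal (dist t s) :=
        setLIntegral_Ioi_add_indicator_Iio _ _ _
    _ ≤ Hint f (dropPoint ρ s) t + ENNReal.ofReal (fdiam X * c) := by
        rw [← ENNReal.ofReal_mul hc, mul_comm]
        gcongr

/-- let `ρ` be a probability measure on a finite metric space `X`,
`s ∈ X` with `0 < ρ(s) < 1`, `ρ'` the conditional measure of `ρ` on `X ∖ {s}`,
and `α = 1/(1 − ρ(s))`. Then for every `t ∈ X`,
`∫₀^∞ h(ρ'(B(t,r))) dr ≥ ∫₀^∞ h(ρ(B(t,r))) dr − diam(X)·(α − 1)`. -/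
theorem stmt16 {X : Type*} [MetricSpace X] [Fintype X]
    (f : ℝ → ℝ) (hf : IsChainingDensity f)
    (ρ : X → ℝ) (hρ : IsProbOn ρ) (s : X) (hs0 : 0 < ρ s) (hs1 : ρ s < 1) :
    ∀ t : X,
      Hint f ρ t - ENNReal.ofReal (fdiam X * (1 / (1 - ρ s) - 1)) ≤
        Hint f (dropPoint ρ s) t :=
  stmt16_general f hf ρ hρ s hs1
end
end

section
/- Let (X,d) be a finite metric space with n points, h a chaining functional of log-concave type, μ a probability measure on X, and α ∈ [0,1). Let p be the probability measure p := (1−α)·μ + α·u, where u is the uniform probability measure on X (u(x) = 1/n for every x). Then for every t ∈ X, ∫₀^∞ h(p(B(t,r))) dr ≤ ∫₀^∞ h(μ(B(t,r))) dr + log(1/(1−α))·diam(X). -/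
open MeasureTheory

noncomputable section

open scoped ENNReal

/-! For a log-concave density `f` with `f 0 = 1`, the tail `F` is submultiplicative,
`F (s + c) ≤ F s * F c`, and `F c ≤ exp (-c)`; both follow by comparing two functions of equal
integral that cross only once. Hence `F (s + log (1/β)) ≤ β * F s`, i.e.
`h (β q) ≤ h q + log (1/β)`. Since `p ≥ (1 - α) μ` pointwise, this bounds `h (p (B (t, r)))`
by `h (μ (B (t, r))) + log (1/(1-α))` for `r ≤ diam X`, while for larger `r` the ball is all
of `X` and `h (p (B (t, r))) = h 1 = 0`. -/

open Set

theorem setIntegral_Ioi_comp_add_right (g : ℝ → ℝ) (a s : ℝ) :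
    ∫ y in Ioi a, g (y + s) = ∫ x in Ioi (a + s), g x := by
  simpa using (measurePreserving_add_right volume s).setIntegral_preimage_emb
    (measurableEmbedding_addRight s) g (Ioi (a + s))

theorem IntegrableOn.comp_add_right_Ioi {g : ℝ → ℝ} {a s : ℝ}
    (h : IntegrableOn g (Ioi (a + s))) : IntegrableOn (fun y => g (y + s)) (Ioi a) := by
  simpa [Function.comp_def] using ((measurePreserving_add_right volume s).integrableOn_comp_preimage
    (measurableEmbedding_addRight s) (f := g) (s := Ioi (a + s))).2 h

theorem setIntegral_Ioi_nonneg_of_crossing {D : ℝ → ℝ} {c : ℝ} (hc : 0 ≤ c)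
    (hD : IntegrableOn D (Ioi 0)) (hD₀ : ∫ y in Ioi 0, D y = 0)
    (hcross : ∀ y₁ > c, D y₁ < 0 → ∀ y ∈ Ioc 0 c, D y ≤ 0) :
    0 ≤ ∫ y in Ioi c, D y := by
  by_cases hpos : ∀ y ∈ Ioi c, 0 ≤ D y
  · exact setIntegral_nonneg measurableSet_Ioi hpos
  simp only [not_forall, not_le] at hpos
  obtain ⟨y₁, hy₁, hneg⟩ := hpos
  have hsplit : ∫ y in Ioi 0, D y = (∫ y in Ioc 0 c, D y) + ∫ y in Ioi c, D y := by
    rw [← Ioc_union_Ioi_eq_Ioi hc]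
    exact setIntegral_union (Ioc_disjoint_Ioi le_rfl) measurableSet_Ioi
      (hD.mono_set Ioc_subset_Ioi_self) (hD.mono_set (Ioi_subset_Ioi hc))
  have hhead : ∫ y in Ioc 0 c, D y ≤ 0 :=
    setIntegral_nonpos measurableSet_Ioc (hcross y₁ hy₁ hneg)
  linarith

namespace IsLogConcaveOn

variable {f : ℝ → ℝ}

theorem mul_le_mul_of_add_eq (hlc : IsLogConcaveOn f) (hnn : ∀ t, 0 ≤ t → 0 ≤ f t)
    {a b c d : ℝ} (ha : 0 ≤ a) (hab : a ≤ b) (hbd : b ≤ d) (hac : a ≤ c)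
    (hsum : a + d = b + c) : f a * f d ≤ f b * f c := by
  rcases (hab.trans hbd).eq_or_lt with rfl | had
  · obtain rfl : b = a := le_antisymm hbd hab
    obtain rfl : c = b := by linarith
    exact le_rfl
  have hd : 0 ≤ d := ha.trans had.le
  obtain rfl : c = a + d - b := by linarith
  -- `b` and `c` are the convex combinations of `a` and `d` with weights `θ` and `1 - θ`
  set θ := (d - b) / (d - a) with hθ
  have hda : 0 < d - a := by linarith
  have hθ₀ : 0 ≤ θ := div_nonneg (by linarith) hda.le
  have hθ₁ : θ ≤ 1 := by rw [hθ, div_le_one hda]; linarith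
  have hb : θ * a + (1 - θ) * d = b := by rw [hθ]; field_simp; ring
  have hc : (1 - θ) * a + (1 - (1 - θ)) * d = a + d - b := by rw [hθ]; field_simp; ring
  have hb' := hlc a ha d hd θ ⟨hθ₀, hθ₁⟩
  have hc' := hlc a ha d hd (1 - θ) ⟨by linarith, by linarith⟩
  rw [hb] at hb'
  rw [hc] at hc'
  have hsplit :
      f a * f d = (f a ^ θ * f d ^ (1 - θ)) * (f a ^ (1 - θ) * f d ^ (1 - (1 - θ))) := by
    rw [mul_mul_mul_comm, ← Real.rpow_add_of_nonneg (hnn a ha) hθ₀ (by linarith),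
      mul_comm (f d ^ _), ← Real.rpow_add_of_nonneg (hnn d hd) (by linarith) (by linarith)]
    norm_num
  rw [hsplit]
  exact mul_le_mul hb' hc'
    (mul_nonneg (Real.rpow_nonneg (hnn a ha) _) (Real.rpow_nonneg (hnn d hd) _))
    (hnn b (ha.trans hab))

theorem rpow_div_le_of_map_zero (hlc : IsLogConcaveOn f) (hf₀ : f 0 = 1) {y y₁ : ℝ}
    (hy : 0 ≤ y) (hyy₁ : y ≤ y₁) (hy₁ : 0 < y₁) : f y₁ ^ (y / y₁) ≤ f y := by
  have h := hlc y₁ (mem_Ici.2 hy₁.le) 0 self_mem_Ici (y / y₁)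
    ⟨by positivity, by rwa [div_le_one hy₁]⟩
  rwa [hf₀, Real.one_rpow, mul_one, mul_zero, add_zero, div_mul_cancel₀ _ hy₁.ne'] at h

end IsLogConcaveOn

namespace IsChainingDensity

variable {f : ℝ → ℝ}

theorem integrableOn (hf : IsChainingDensity f) : IntegrableOn f (Ioi 0) := by
  by_contra h
  simpa [integral_undef h] using hf.total

theorem ccdf_nonneg (hf : IsChainingDensity f) {s : ℝ} (hs : 0 ≤ s) : 0 ≤ ccdf f s :=
  setIntegral_nonneg measurableSet_Ioi fun y hy => hf.nonneg y (hs.trans (le_of_lt hy))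

theorem ccdf_zero (hf : IsChainingDensity f) : ccdf f 0 = 1 := hf.total

theorem ccdf_add_le_mul (hf : IsChainingDensity f) {s c : ℝ} (hs : 0 ≤ s) (hc : 0 ≤ c) :
    ccdf f (s + c) ≤ ccdf f s * ccdf f c := by
  have hint := hf.integrableOn
  have hshift : IntegrableOn (fun y => f (y + s)) (Ioi 0) :=
    IntegrableOn.comp_add_right_Ioi (hint.mono_set (Ioi_subset_Ioi (by linarith)))
  set D : ℝ → ℝ := fun y => ccdf f s * f y - f (y + s) with hD
  have hDint : IntegrableOn D (Ioi 0) := (hint.const_mul _).sub hshift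
  have hD₀ : ∫ y in Ioi 0, D y = 0 := by
    rw [hD, integral_sub (hint.const_mul _) hshift, integral_const_mul,
      setIntegral_Ioi_comp_add_right, zero_add, hf.total, ccdf, mul_one, sub_self]
  have htail : ∫ y in Ioi c, D y = ccdf f s * ccdf f c - ccdf f (s + c) := by
    rw [integral_sub ((hint.mono_set (Ioi_subset_Ioi hc)).const_mul _)
      (hshift.mono_set (Ioi_subset_Ioi hc)), integral_const_mul,
      setIntegral_Ioi_comp_add_right, add_comm c s]
    rfl
  suffices 0 ≤ ∫ y in Ioi c, D y by linarith
  refine setIntegral_Ioi_nonneg_of_crossing hc hDint hD₀ fun y₁ hy₁ hneg y hy => ?_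
  have hfy₁ : 0 < f y₁ := by
    have hfs : 0 < f (y₁ + s) := by
      have := mul_nonneg (hf.ccdf_nonneg hs) (hf.nonneg y₁ (by linarith))
      simp only [hD] at hneg; linarith
    exact hfs.trans_le (hf.antitoneOn (mem_Ici.2 (by linarith)) (mem_Ici.2 (by linarith))
      (by linarith))
  -- log-concavity makes `f (· + s) / f` nondecreasing, so `D / f` changes sign only once
  have hfour : f y * f (y₁ + s) ≤ f y₁ * f (y + s) :=
    hf.logConcave.mul_le_mul_of_add_eq hf.nonneg hy.1.le (by linarith [hy.2]) (by linarith)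
      (by linarith) (by ring)
  have hfy := hf.nonneg y hy.1.le
  simp only [hD] at hneg ⊢
  nlinarith [mul_nonneg hfy (neg_nonneg.2 hneg.le)]

theorem ccdf_le_exp_neg (hf : IsChainingDensity f) {s : ℝ} (hs : 0 ≤ s) :
    ccdf f s ≤ Real.exp (-s) := by
  have hint := hf.integrableOn
  have hexp : IntegrableOn (fun y => Real.exp (-y)) (Ioi 0) := by
    simpa using exp_neg_integrableOn_Ioi 0 one_pos
  set D : ℝ → ℝ := fun y => Real.exp (-y) - f y with hD
  have hD₀ : ∫ y in Ioi 0, D y = 0 := by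
    rw [hD, integral_sub hexp hint, integral_exp_neg_Ioi_zero, hf.total, sub_self]
  have htail : ∫ y in Ioi s, D y = Real.exp (-s) - ccdf f s := by
    rw [hD, integral_sub (hexp.mono_set (Ioi_subset_Ioi hs)) (hint.mono_set (Ioi_subset_Ioi hs)),
      integral_exp_neg_Ioi]
    rfl
  suffices 0 ≤ ∫ y in Ioi s, D y by linarith
  refine setIntegral_Ioi_nonneg_of_crossing hs (hexp.sub hint) hD₀ fun y₁ hy₁ hneg y hy => ?_
  have hy₁₀ : 0 < y₁ := hs.trans_lt hy₁
  simp only [hD] at hneg ⊢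
  -- `log f + id` is concave and vanishes at `0`, so it is nonnegative before any zero crossing
  have hexp_rpow : Real.exp (-y₁) ^ (y / y₁) = Real.exp (-y) := by
    rw [← Real.exp_mul]; field_simp
  have := Real.rpow_lt_rpow (Real.exp_pos _).le (sub_neg.1 hneg) (div_pos hy.1 hy₁₀)
  linarith [hf.logConcave.rpow_div_le_of_map_zero hf.normalized hy.1.le
    (hy.2.trans hy₁.le) hy₁₀]

theorem ccdf_add_log_le (hf : IsChainingDensity f) {s β : ℝ} (hs : 0 ≤ s) (hβ₀ : 0 < β)
    (hβ₁ : β ≤ 1) : ccdf f (s + Real.log (1 / β)) ≤ β * ccdf f s := by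
  have hc : 0 ≤ Real.log (1 / β) := Real.log_nonneg (by rw [le_div_iff₀ hβ₀]; linarith)
  calc ccdf f (s + Real.log (1 / β)) ≤ ccdf f s * ccdf f (Real.log (1 / β)) :=
        hf.ccdf_add_le_mul hs hc
    _ ≤ ccdf f s * Real.exp (-Real.log (1 / β)) :=
        mul_le_mul_of_nonneg_left (hf.ccdf_le_exp_neg hc) (hf.ccdf_nonneg hs)
    _ = β * ccdf f s := by
        rw [one_div, Real.log_inv, neg_neg, Real.exp_log hβ₀, mul_comm]

theorem chainFnE_of_one_le (hf : IsChainingDensity f) {q : ℝ} (hq : 1 ≤ q) :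
    chainFnE f q = 0 :=
  nonpos_iff_eq_zero.1 <| sInf_le ⟨0, le_rfl, hf.ccdf_zero ▸ hq, ENNReal.ofReal_zero.symm⟩

theorem chainFnE_le_add_log (hf : IsChainingDensity f) {β q q' : ℝ} (hβ₀ : 0 < β)
    (hβ₁ : β ≤ 1) (hq : β * q ≤ q') :
    chainFnE f q' ≤ chainFnE f q + ENNReal.ofReal (Real.log (1 / β)) := by
  have hc : 0 ≤ Real.log (1 / β) := Real.log_nonneg (by rw [le_div_iff₀ hβ₀]; linarith)
  rw [chainFnE, chainFnE, ENNReal.sInf_add]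
  refine le_iInf₂ fun t ⟨s, hs, hFs, ht⟩ => ?_
  rw [ht, ← ENNReal.ofReal_add hs hc]
  refine sInf_le ⟨s + Real.log (1 / β), by linarith, ?_, rfl⟩
  calc ccdf f (s + Real.log (1 / β)) ≤ β * ccdf f s := hf.ccdf_add_log_le hs hβ₀ hβ₁
    _ ≤ β * q := mul_le_mul_of_nonneg_left hFs hβ₀.le
    _ ≤ q' := hq

end IsChainingDensity

section Ball

variable {X : Type*} [MetricSpace X] [Fintype X]

theorem mul_ballMass_le {μ ν : X → ℝ} {β : ℝ} (h : ∀ x, β * μ x ≤ ν x) (t : X) (r : ℝ) :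
    β * ballMass μ t r ≤ ballMass ν t r := by
  rw [ballMass, ballMass, Finset.mul_sum]
  exact Finset.sum_le_sum fun y _ => h y

theorem ballMass_of_fdiam_le (μ : X → ℝ) (t : X) {r : ℝ} (hr : fdiam X ≤ r) :
    ballMass μ t r = ∑ x, μ x := by
  rw [ballMass, Finset.filter_true_of_mem fun y _ =>
    (Metric.dist_le_diam_of_mem Set.finite_univ.isBounded (mem_univ t) (mem_univ y)).trans hr]

theorem Hint_le_add_log_mul_fdiam {f : ℝ → ℝ} (hf : IsChainingDensity f) {μ ν : X → ℝ}
    {β : ℝ} (hβ₀ : 0 < β) (hβ₁ : β ≤ 1) (h : ∀ x, β * μ x ≤ ν x) (hν : ∑ x, ν x = 1)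
    (t : X) : Hint f ν t ≤ Hint f μ t + ENNReal.ofReal (Real.log (1 / β) * fdiam X) := by
  set d := ENNReal.ofReal (Real.log (1 / β))
  -- beyond the diameter every ball is all of `X`, so the chaining functional vanishes there
  have hpt : ∀ r ∈ Ioi (0 : ℝ), chainFnE f (ballMass ν t r) ≤
      chainFnE f (ballMass μ t r) + (Ioc 0 (fdiam X)).indicator (fun _ => d) r := by
    intro r hr
    by_cases hrD : r ≤ fdiam X
    · rw [indicator_of_mem (show r ∈ Ioc 0 (fdiam X) from ⟨hr, hrD⟩)]
      exact hf.chainFnE_le_add_log hβ₀ hβ₁ (mul_ballMass_le h t r)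
    · rw [hf.chainFnE_of_one_le (ballMass_of_fdiam_le ν t (le_of_not_ge hrD) ▸ hν.ge)]
      exact bot_le
  calc Hint f ν t
      ≤ ∫⁻ r in Ioi 0,
          chainFnE f (ballMass μ t r) + (Ioc 0 (fdiam X)).indicator (fun _ => d) r :=
        setLIntegral_mono' measurableSet_Ioi hpt
    _ = Hint f μ t + ∫⁻ r in Ioi 0, (Ioc 0 (fdiam X)).indicator (fun _ => d) r :=
        lintegral_add_right _ (measurable_const.indicator measurableSet_Ioc)
    _ = Hint f μ t + ENNReal.ofReal (Real.log (1 / β) * fdiam X) := by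
        rw [lintegral_indicator measurableSet_Ioc, setLIntegral_const,
          Measure.restrict_apply measurableSet_Ioc, inter_eq_left.2 Ioc_subset_Ioi_self,
          Real.volume_Ioc, sub_zero, ← ENNReal.ofReal_mul
            (Real.log_nonneg (by rw [le_div_iff₀ hβ₀]; linarith))]

end Ball

/-- let `μ` be a probability measure on an `n`-point metric space
`X`, `α ∈ [0,1)`, and `p = (1−α)·μ + α·u` with `u` the uniform measure on `X`.
Then for every `t ∈ X`,
`∫₀^∞ h(p(B(t,r))) dr ≤ ∫₀^∞ h(μ(B(t,r))) dr + log(1/(1−α))·diam(X)`. -/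
theorem stmt17 {X : Type*} [MetricSpace X] [Fintype X] [Nonempty X]
    (f : ℝ → ℝ) (hf : IsChainingDensity f)
    (μ : X → ℝ) (hμ : IsProbOn μ) (α : ℝ) (hα : α ∈ Set.Ico (0:ℝ) 1) :
    ∀ t : X,
      Hint f (fun x => (1 - α) * μ x + α * (1 / (Fintype.card X : ℝ))) t ≤
        Hint f μ t + ENNReal.ofReal (Real.log (1 / (1 - α)) * fdiam X) := by
  obtain ⟨hα₀, hα₁⟩ := hα
  have hcard : (Fintype.card X : ℝ) ≠ 0 := by exact_mod_cast Fintype.card_ne_zero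
  refine Hint_le_add_log_mul_fdiam hf (by linarith) (by linarith) (fun x => ?_) ?_
  · have : 0 ≤ α * (1 / (Fintype.card X : ℝ)) := by positivity
    linarith
  · rw [Finset.sum_add_distrib, ← Finset.mul_sum, hμ.2, Finset.sum_const, Finset.card_univ,
      nsmul_eq_mul]
    field_simp
    ring
end
end

section
/- Let (X,d) be a finite metric space, f : [0,∞) → [0,∞) a continuous, non-increasing probability density on the non-negative reals with complementary cumulative distribution function F(s) := ∫_s^∞ f(t) dt and induced chaining functional h := F⁻¹ on (0,1]. Let (Z_x)_{x∈X} be real-valued random variables on a probability space (Ω, P) satisfying the tail bound P(|Z_u − Z_v| ≥ d(u,v)·s) ≤ F(s) for all distinct u,v ∈ X and all s ≥ 0. Then for every chaining tree C for (X,d) (with edge lengths computed via h), P( max_{x₁,x₂∈X} (Z_{x₁} − Z_{x₂}) > 2·val_h(C) ) ≤ 1/2. -/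
open MeasureTheory

noncomputable section

/-- `f` is a continuous, non-increasing probability density on `[0,∞)`. -/
structure IsTailDensity (f : ℝ → ℝ) : Prop where
  nonneg : ∀ t : ℝ, 0 ≤ t → 0 ≤ f t
  continuousOn : ContinuousOn f (Set.Ici 0)
  antitoneOn : AntitoneOn f (Set.Ici 0)
  total : (∫ t in Set.Ioi (0:ℝ), f t) = 1

/-- The sum of the edge labels of a rooted spanning tree described by a parent
function (one edge per non-root vertex). -/
def edgeLabelSum {X : Type*} [Fintype X] (root : X) (prob : X → ℝ) : ℝ :=
  letI := Classical.decEq X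
  ∑ x ∈ Finset.univ.erase root, prob x

/-- A chaining tree on the finite metric space `X`: a rooted spanning tree on `X`
(described by a parent function), together with probability labels
`p_e ∈ (0,1/2]` on the edges `e = {x, parent x}` (`x ≠ root`) summing to at most
`1/2`. -/
structure ChainingTree (X : Type*) [MetricSpace X] [Fintype X] where
  root : X
  parent : X → X
  prob : X → ℝ
  parent_root : parent root = root
  reaches_root : ∀ x : X, ∃ n : ℕ, parent^[n] x = root
  prob_mem : ∀ x : X, x ≠ root → prob x ∈ Set.Ioc (0:ℝ) (1/2)
  prob_sum : edgeLabelSum root prob ≤ 1/2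

/-- The length `l_e = d(u,v)·h(p_e)` of the parent edge at `x` (zero at the root). -/
def edgeLen {X : Type*} [MetricSpace X] [Fintype X] (f : ℝ → ℝ)
    (C : ChainingTree X) (x : X) : ℝ :=
  dist x (C.parent x) * chainFn f (C.prob x)

/-- The total length `Σ_{e ∈ P_x} l_e` of the path from `x` to the root (the path
reaches the root within `|X|` steps, and the root's term is `0`). -/
def pathLen {X : Type*} [MetricSpace X] [Fintype X] (f : ℝ → ℝ)
    (C : ChainingTree X) (x : X) : ℝ :=
  ∑ n ∈ Finset.range (Fintype.card X), edgeLen f C (C.parent^[n] x)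

/-- The value `val_h(C) = max_{x∈X} Σ_{e ∈ P_x} l_e` of a chaining tree. -/
def ctVal {X : Type*} [MetricSpace X] [Fintype X] (f : ℝ → ℝ)
    (C : ChainingTree X) : ℝ :=
  ⨆ x : X, pathLen f C x

open Filter Topology

/-! On the event that every tree edge `{u, parent u}` satisfies
`|Z u - Z (parent u)| < d(u, parent u) · h(p_u)`, telescoping along the path to the root gives
`|Z x - Z root| ≤ val_h(C)` for every `x`, hence `Z x₁ - Z x₂ ≤ 2 val_h(C)`. Since `F(h(p)) ≤ p`,
the tail bound makes the complementary event of each edge have probability at most `p_u`, and a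
union bound over the edges gives at most `Σ p_u ≤ 1/2`. -/

section ChainingFunctional

variable {f : ℝ → ℝ}

lemma IsTailDensity.integrableOn (hf : IsTailDensity f) : IntegrableOn f (Set.Ioi 0) :=
  Integrable.of_integral_ne_zero (hf.total ▸ one_ne_zero)

lemma continuousOn_ccdf {a : ℝ} (hf : IntegrableOn f (Set.Ioi a)) :
    ContinuousOn (ccdf f) (Set.Ici a) :=
  hf.continuousOn_Ici_primitive_Ioi

lemma tendsto_ccdf_atTop (f : ℝ → ℝ) : Tendsto (ccdf f) atTop (𝓝 0) :=
  tendsto_integral_Ioi_zero tendsto_id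

lemma chainFn_mem (hf : IntegrableOn f (Set.Ioi 0)) {p : ℝ} (hp : 0 < p) :
    0 ≤ chainFn f p ∧ ccdf f (chainFn f p) ≤ p := by
  have hclosed : IsClosed (Set.Ici 0 ∩ ccdf f ⁻¹' Set.Iic p) :=
    (continuousOn_ccdf hf).preimage_isClosed_of_isClosed isClosed_Ici isClosed_Iic
  have hne : {s : ℝ | 0 ≤ s ∧ ccdf f s ≤ p}.Nonempty :=
    ((eventually_ge_atTop 0).and
      ((tendsto_ccdf_atTop f).eventually (eventually_le_nhds hp))).exists
  exact hclosed.csInf_mem hne ⟨0, fun _ hs => hs.1⟩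

end ChainingFunctional

/-- Before `y` is first hit, the iterates of `x` are pairwise distinct. -/
lemma Function.iterate_card_eq_of_isFixedPt {α : Type*} [Fintype α] {g : α → α} {x y : α}
    (hy : IsFixedPt g y) (hxy : ∃ n, g^[n] x = y) : g^[Fintype.card α] x = y := by
  classical
  set m := Nat.find hxy
  have hm : g^[m] x = y := Nat.find_spec hxy
  have hne : ∀ i j : ℕ, i < j → j ≤ m → g^[i] x ≠ g^[j] x := by
    intro i j hij hjm heq
    refine Nat.find_min hxy (show m - j + i < m by omega) ?_
    rw [Function.iterate_add_apply, heq, ← Function.iterate_add_apply,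
      show m - j + j = m by omega, hm]
  have hinj : Function.Injective (fun i : Fin (m + 1) => g^[i] x) := by
    intro i j hij
    by_contra h
    rcases lt_or_gt_of_ne (Fin.val_ne_of_ne h) with h | h
    · exact hne i j h (Nat.lt_succ_iff.mp j.isLt) hij
    · exact hne j i h (Nat.lt_succ_iff.mp i.isLt) hij.symm
  have hcard : m < Fintype.card α := by
    simpa using Fintype.card_le_of_injective _ hinj
  rw [show Fintype.card α = (Fintype.card α - m) + m by omega, Function.iterate_add_apply, hm,
    hy.iterate]

namespace ChainingTree

variable {X : Type*} [MetricSpace X] [Fintype X] (C : ChainingTree X)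

lemma parent_ne_self {x : X} (hx : x ≠ C.root) : x ≠ C.parent x := by
  intro h
  obtain ⟨n, hn⟩ := C.reaches_root x
  exact hx (Function.iterate_fixed h.symm n ▸ hn)

lemma iterate_card_eq_root (x : X) : C.parent^[Fintype.card X] x = C.root :=
  Function.iterate_card_eq_of_isFixedPt C.parent_root (C.reaches_root x)

variable {f : ℝ → ℝ}

lemma abs_sub_root_le_pathLen {z : X → ℝ}
    (hz : ∀ u, u ≠ C.root → |z u - z (C.parent u)| ≤ edgeLen f C u) (x : X) :
    |z x - z C.root| ≤ pathLen f C x := by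
  have htelescope : z x - z C.root = ∑ n ∈ Finset.range (Fintype.card X),
      (z (C.parent^[n] x) - z (C.parent^[n + 1] x)) := by
    rw [Finset.sum_range_sub', C.iterate_card_eq_root x, Function.iterate_zero_apply]
  rw [htelescope]
  refine (Finset.abs_sum_le_sum_abs _ _).trans (Finset.sum_le_sum fun n _ => ?_)
  rw [Function.iterate_succ_apply']
  by_cases hu : C.parent^[n] x = C.root
  · simp [hu, edgeLen, C.parent_root]
  · exact hz _ hu

lemma sub_le_two_mul_ctVal {z : X → ℝ}
    (hz : ∀ u, u ≠ C.root → |z u - z (C.parent u)| ≤ edgeLen f C u) (x₁ x₂ : X) :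
    z x₁ - z x₂ ≤ 2 * ctVal f C := by
  have hle : ∀ x, pathLen f C x ≤ ctVal f C := le_ciSup (Set.finite_range _).bddAbove
  have h₁ := abs_le.mp (C.abs_sub_root_le_pathLen hz x₁)
  have h₂ := abs_le.mp (C.abs_sub_root_le_pathLen hz x₂)
  linarith [hle x₁, hle x₂]

lemma sum_ofReal_prob_le [DecidableEq X] :
    ∑ u ∈ Finset.univ.erase C.root, ENNReal.ofReal (C.prob u) ≤ 1 / 2 := by
  rw [← ENNReal.ofReal_sum_of_nonneg fun u hu => (C.prob_mem u (Finset.ne_of_mem_erase hu)).1.le,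
    ← ENNReal.ofReal_one, ← ENNReal.ofReal_ofNat 2, ← ENNReal.ofReal_div_of_pos two_pos]
  refine ENNReal.ofReal_le_ofReal (le_of_eq_of_le ?_ C.prob_sum)
  unfold edgeLabelSum
  convert rfl

end ChainingTree

theorem stmt18_general {X : Type*} [MetricSpace X] [Fintype X]
    (f : ℝ → ℝ) (hf : IsTailDensity f)
    {Ω : Type*} [MeasurableSpace Ω] (P : Measure Ω)
    (Z : X → Ω → ℝ)
    (htail : ∀ u v : X, u ≠ v → ∀ s : ℝ, 0 ≤ s →
      P {ω | dist u v * s ≤ |Z u ω - Z v ω|} ≤ ENNReal.ofReal (ccdf f s))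
    (C : ChainingTree X) :
    P {ω | ∃ x₁ x₂ : X, 2 * ctVal f C < Z x₁ ω - Z x₂ ω} ≤ 1/2 := by
  classical
  let badEdge : X → Set Ω := fun u => {ω | edgeLen f C u ≤ |Z u ω - Z (C.parent u) ω|}
  have hsub : {ω | ∃ x₁ x₂ : X, 2 * ctVal f C < Z x₁ ω - Z x₂ ω} ⊆
      ⋃ u ∈ Finset.univ.erase C.root, badEdge u := by
    rintro ω ⟨x₁, x₂, hx⟩
    by_contra! hgood
    simp only [Set.mem_iUnion, Finset.mem_erase, Finset.mem_univ, and_true, not_exists] at hgood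
    refine hx.not_ge (C.sub_le_two_mul_ctVal (z := (Z · ω)) (fun u hu => ?_) x₁ x₂)
    exact (not_le.mp (hgood u hu)).le
  have hbadEdge : ∀ u ∈ Finset.univ.erase C.root, P (badEdge u) ≤ ENNReal.ofReal (C.prob u) := by
    intro u hu
    have hu' := Finset.ne_of_mem_erase hu
    obtain ⟨hh₀, hh⟩ := chainFn_mem hf.integrableOn (C.prob_mem u hu').1
    exact (htail u _ (C.parent_ne_self hu') _ hh₀).trans (ENNReal.ofReal_le_ofReal hh)
  calc P {ω | ∃ x₁ x₂ : X, 2 * ctVal f C < Z x₁ ω - Z x₂ ω}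
      ≤ ∑ u ∈ Finset.univ.erase C.root, P (badEdge u) :=
        (measure_mono hsub).trans (measure_biUnion_finset_le _ _)
    _ ≤ 1 / 2 := (Finset.sum_le_sum hbadEdge).trans C.sum_ofReal_prob_le

/-- let `(Z_x)_{x∈X}` be real random variables on a probability
space `(Ω, P)`, indexed by a finite metric space `X`, satisfying the tail bound
`P(|Z_u − Z_v| ≥ d(u,v)·s) ≤ F(s)` for all distinct `u, v` and `s ≥ 0`. Then for
any chaining tree `C` for `X` (with edge lengths computed via `h = F⁻¹`),
`P(max_{x₁,x₂} (Z_{x₁} − Z_{x₂}) > 2·val_h(C)) ≤ 1/2`. -/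
theorem stmt18 {X : Type*} [MetricSpace X] [Fintype X]
    (f : ℝ → ℝ) (hf : IsTailDensity f)
    {Ω : Type*} [MeasurableSpace Ω] (P : Measure Ω) [IsProbabilityMeasure P]
    (Z : X → Ω → ℝ) (hZmeas : ∀ x, Measurable (Z x))
    (htail : ∀ u v : X, u ≠ v → ∀ s : ℝ, 0 ≤ s →
      P {ω | dist u v * s ≤ |Z u ω - Z v ω|} ≤ ENNReal.ofReal (ccdf f s))
    (C : ChainingTree X) :
    P {ω | ∃ x₁ x₂ : X, 2 * ctVal f C < Z x₁ ω - Z x₂ ω} ≤ 1/2 :=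
  stmt18_general f hf P Z htail C
end
end
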